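/- arXiv:1812.01422 — 2 statements merged into one kernel-verified Lean document; each statement's English description precedes it below -/
import Mathlib

section
/- Let S be a manifold, T a skew-symmetric (1,2)-tensor field on S, and φ ∈ C^∞(S). Define the 2-form Ω_T on T*S by Ω_T(α)(U, V) := α(T((T_α τ_S)(U), (T_α τ_S)(V))) for α ∈ T*S and U, V ∈ T_α(T*S). Then Ω_T = λ_S ∧ d(φ∘τ_S) if and only if T(Y, Z) = Z[φ] Y − Y[φ] Z for all vector fields Y, Z on S. -/
open BigOperators

noncomputable section

/-- The shape space `S = ℝʳ`. -/
abbrev Vm (r : ℕ) := Fin r → ℝ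

/-- The cotangent bundle `T*S = ℝʳ × ℝʳ` (base point, covector). -/
abbrev TVm (r : ℕ) := Vm r × Vm r

/-- The Liouville 1-form `λ_S` on `T*S`: `λ_S(s,p)(U) = p(Tτ_S U)`. -/
def lamS (r : ℕ) : TVm r → TVm r → ℝ := fun x u => ∑ i, x.2 i * u.1 i

lemma fderiv_comp_fst {r : ℕ} (φ : Vm r → ℝ) (hφ : ContDiff ℝ (⊤ : ℕ∞) φ)
    (x : TVm r) (V : TVm r) :
    fderiv ℝ (fun z : TVm r => φ z.1) x V = fderiv ℝ φ x.1 V.1 := by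
  have h : fderiv ℝ (fun z : TVm r => φ z.1) x
      = (fderiv ℝ φ x.1).comp (ContinuousLinearMap.fst ℝ (Vm r) (Vm r)) := by
    have := fderiv_comp (g := φ) (f := Prod.fst) x
      ((hφ.differentiable (by simp)) x.1) differentiable_fst.differentiableAt
    simpa [fderiv_fst, Function.comp_def] using this
  rw [h]; rfl

/-- For a skew-symmetric (1,2)-tensor `T` on `S = ℝʳ` (acting pointwise on
constant vector fields) and `φ ∈ C^∞(S)`, the 2-form
`Ω_T(α)(U,V) = α(T(Tτ_S U, Tτ_S V))` on `T*S` equals `λ_S ∧ d(φ∘τ_S)` if and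
only if `T(Y,Z) = Z[φ] Y − Y[φ] Z` for all vector fields `Y, Z`. -/
theorem stmt9 (r : ℕ) (T : Vm r → Vm r → Vm r → Vm r)
    (hskew : ∀ x u v, T x v u = -T x u v)
    (φ : Vm r → ℝ) (hφ : ContDiff ℝ (⊤ : ℕ∞) φ) :
    (∀ (x U V : TVm r),
        (∑ i, x.2 i * T x.1 U.1 V.1 i) =
          lamS r x U * fderiv ℝ (fun z : TVm r => φ z.1) x V
            - lamS r x V * fderiv ℝ (fun z : TVm r => φ z.1) x U) ↔
      (∀ x u v, T x u v = fderiv ℝ φ x v • u - fderiv ℝ φ x u • v) := by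
  constructor
  · intro h x u v
    funext i
    have := h (x, Pi.single i 1) (u, 0) (v, 0)
    simp only [fderiv_comp_fst φ hφ, lamS, Pi.single_apply, ite_mul, one_mul,
      zero_mul, Finset.sum_ite_eq, Finset.sum_ite_eq', Finset.mem_univ, if_true] at this
    simp only [Pi.sub_apply, Pi.smul_apply, smul_eq_mul]
    linarith [this]
  · intro h x U V
    have hu := fderiv_comp_fst φ hφ x U
    have hv := fderiv_comp_fst φ hφ x V
    rw [hu, hv, h x.1 U.1 V.1]
    simp only [lamS, Pi.sub_apply, Pi.smul_apply, smul_eq_mul]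
    simp only [mul_sub]
    rw [Finset.sum_sub_distrib, Finset.sum_mul, Finset.sum_mul]
    congr 1 <;> (apply Finset.sum_congr rfl; intro i _; ring)
end
end

section
/- Let g ∈ SO(n) and γ = g⁻¹ eₙ. For i, j ∈ {1,…,n}, the vector fields on SO(n) defined by Y_i(g) = γ(g) ∧ e_i (in the left trivialization T_g SO(n) ≅ 𝔰𝔬(n)) satisfy the Lie bracket identity [Y_i, Y_j] = e_i ∧ e_j (a constant, i.e. left-invariant, vector field). -/
/-!
Along the curve `h = g exp(tA)` the row `γ(h) = h_last` moves with velocity `γᵀA`, and for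
`A = γ ∧ v` this is `|γ|² v − ⟨γ, v⟩ γ`. Feeding these derivatives into the bracket formula and
expanding the commutator `[γ ∧ v, γ ∧ w]`, every term containing `γ` cancels, leaving
`[Y_v, Y_w] = |γ|² v ∧ w`; for orthogonal `g` the row `γ` is a unit vector.
-/

open Matrix BigOperators

noncomputable section

/-- `u ∧ v := u vᵀ − v uᵀ ∈ 𝔰𝔬(N)`. -/
def wedgeVec {N : ℕ} (u v : Fin N → ℝ) : Matrix (Fin N) (Fin N) ℝ :=
  Matrix.of fun i j => u i * v j - v i * u j

/-- The Lie bracket of vector fields on `SO(N)` in the left trivialization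
`T_g SO(N) ≅ 𝔰𝔬(N)`:
`[Y,Z](g) = dZ_g(gY(g)) − dY_g(gZ(g)) + [Y(g),Z(g)]`, where directional
derivatives are computed entrywise along the curves `t ↦ g exp(t Y(g))`. -/
def bracketLT {N : ℕ}
    (Y Z : Matrix (Fin N) (Fin N) ℝ → Matrix (Fin N) (Fin N) ℝ)
    (g : Matrix (Fin N) (Fin N) ℝ) : Matrix (Fin N) (Fin N) ℝ :=
  Matrix.of fun k l =>
    deriv (fun t : ℝ => Z (g * NormedSpace.exp (t • Y g)) k l) 0
      - deriv (fun t : ℝ => Y (g * NormedSpace.exp (t • Z g)) k l) 0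
      + (Y g * Z g - Z g * Y g) k l

theorem wedgeVec_eq_sub_vecMulVec {N : ℕ} (u v : Fin N → ℝ) :
    wedgeVec u v = vecMulVec u v - vecMulVec v u := by
  ext k l
  simp [wedgeVec, vecMulVec_apply]

theorem vecMul_wedgeVec {N : ℕ} (x u v : Fin N → ℝ) :
    x ᵥ* wedgeVec u v = (x ⬝ᵥ u) • v - (x ⬝ᵥ v) • u := by
  rw [wedgeVec_eq_sub_vecMulVec, vecMul_sub, vecMul_vecMulVec, vecMul_vecMulVec]

theorem wedgeVec_mul_sub_mul_wedgeVec {N : ℕ} (a b c d : Fin N → ℝ) :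
    wedgeVec a b * wedgeVec c d - wedgeVec c d * wedgeVec a b =
      (b ⬝ᵥ c) • wedgeVec a d - (b ⬝ᵥ d) • wedgeVec a c
        - (a ⬝ᵥ c) • wedgeVec b d + (a ⬝ᵥ d) • wedgeVec b c := by
  simp only [wedgeVec_eq_sub_vecMulVec, mul_sub, sub_mul, vecMulVec_mul_vecMulVec, vecMulVec_smul,
    smul_sub]
  rw [dotProduct_comm d a, dotProduct_comm d b, dotProduct_comm c a, dotProduct_comm c b]
  module

section
attribute [local instance] Matrix.linftyOpNormedAddCommGroup Matrix.linftyOpNormedRing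
  Matrix.linftyOpNormedAlgebra

theorem hasDerivAt_mul_exp_smul_apply {ι : Type*} [Fintype ι] [DecidableEq ι]
    (g A : Matrix ι ι ℝ) (k l : ι) :
    HasDerivAt (fun t : ℝ => (g * NormedSpace.exp (t • A)) k l) ((g * A) k l) 0 := by
  have hexp := hasDerivAt_exp_smul_const (𝕂 := ℝ) A 0
  rw [zero_smul, NormedSpace.exp_zero, one_mul] at hexp
  exact (LinearMap.toContinuousLinearMap (entryLinearMap ℝ ℝ k l)).hasFDerivAt.comp_hasDerivAt 0
    (hexp.const_mul g)

end

theorem hasDerivAt_wedgeVec_row_mul_exp_apply {N : ℕ} (g A : Matrix (Fin N) (Fin N) ℝ)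
    (L : Fin N) (v : Fin N → ℝ) (k l : Fin N) :
    HasDerivAt (fun t : ℝ => wedgeVec ((g * NormedSpace.exp (t • A)) L) v k l)
      (wedgeVec (g L ᵥ* A) v k l) 0 :=
  ((hasDerivAt_mul_exp_smul_apply g A L k).mul_const (v l)).sub
    ((hasDerivAt_mul_exp_smul_apply g A L l).const_mul (v k))

theorem bracketLT_wedgeVec_row {N : ℕ} (L : Fin N) (v w : Fin N → ℝ)
    (g : Matrix (Fin N) (Fin N) ℝ) :
    bracketLT (fun h => wedgeVec (h L) v) (fun h => wedgeVec (h L) w) g =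
      (g L ⬝ᵥ g L) • wedgeVec v w := by
  have hbracket : bracketLT (fun h => wedgeVec (h L) v) (fun h => wedgeVec (h L) w) g =
      wedgeVec (g L ᵥ* wedgeVec (g L) v) w - wedgeVec (g L ᵥ* wedgeVec (g L) w) v +
        (wedgeVec (g L) v * wedgeVec (g L) w - wedgeVec (g L) w * wedgeVec (g L) v) := by
    ext k l
    simp only [bracketLT, of_apply, Matrix.add_apply, Matrix.sub_apply,
      (hasDerivAt_wedgeVec_row_mul_exp_apply _ _ _ _ _ _).deriv]
  rw [hbracket, wedgeVec_mul_sub_mul_wedgeVec, vecMul_wedgeVec, vecMul_wedgeVec]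
  simp only [wedgeVec_eq_sub_vecMulVec, sub_vecMulVec, vecMulVec_sub, smul_vecMulVec,
    vecMulVec_smul, smul_sub]
  rw [dotProduct_comm v (g L)]
  module

theorem stmt17_general {n : ℕ} (i j : Fin (n + 1))
    (g : Matrix (Fin (n + 1)) (Fin (n + 1)) ℝ)
    (hO : g * g.transpose = 1) :
    bracketLT
        (fun h => wedgeVec (fun m => h (Fin.last n) m) (Pi.single i 1))
        (fun h => wedgeVec (fun m => h (Fin.last n) m) (Pi.single j 1)) g =
      wedgeVec (Pi.single i 1) (Pi.single j 1) := by
  have hrow : g (Fin.last n) ⬝ᵥ g (Fin.last n) = 1 := by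
    simpa only [mul_apply, transpose_apply, one_apply_eq, dotProduct] using
      congrFun (congrFun hO (Fin.last n)) (Fin.last n)
  simpa only [hrow, one_smul] using
    bracketLT_wedgeVec_row (Fin.last n) (Pi.single i 1) (Pi.single j 1) g

/-- For `g ∈ SO(n+1)` and `γ = g⁻¹ e_last`, the vector fields
`Y_i(g) = γ(g) ∧ e_i` satisfy `[Y_i, Y_j] = e_i ∧ e_j`. -/
theorem stmt17 {n : ℕ} (i j : Fin (n + 1))
    (g : Matrix (Fin (n + 1)) (Fin (n + 1)) ℝ)
    (hO : g * g.transpose = 1) (hdet : g.det = 1) :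
    bracketLT
        (fun h => wedgeVec (fun m => h (Fin.last n) m) (Pi.single i 1))
        (fun h => wedgeVec (fun m => h (Fin.last n) m) (Pi.single j 1)) g =
      wedgeVec (Pi.single i 1) (Pi.single j 1) :=
  stmt17_general i j g hO
end
end
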